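/- Let G be a connected n-vertex d-regular multigraph with a cut-vertex v, and suppose the vertex set of G − v is partitioned into nonempty sets S₁ and S₂ of sizes s₁ and s₂ respectively, each a union of connected components of G − v. Let m₁ and m₂ be the numbers of edges (counted with multiplicity) joining v to S₁ and to S₂ respectively. Then λ2(G) ≥ (1/2)·[ d − m₁/s₁ − m₂/s₂ + √( (d − m₁/s₁ − m₂/s₂)² + 4(m₁²/s₁ + m₂²/s₂ − m₁m₂/(s₁s₂)) ) ]. -/

import Mathlib

open Matrix Finset BigOperators

/-- Ascending list of the real roots (with multiplicity) of the characteristic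
polynomial of a square real matrix.  For a matrix all of whose eigenvalues are
real, this is the list of eigenvalues in increasing order. -/
noncomputable def eigList {n : ℕ} (A : Matrix (Fin n) (Fin n) ℝ) : List ℝ :=
  A.charpoly.roots.sort (· ≤ ·)

/-- The second-largest eigenvalue (counted with multiplicity) of a square real
matrix with real spectrum. -/
noncomputable def lambda2 {n : ℕ} (A : Matrix (Fin n) (Fin n) ℝ) : ℝ :=
  (eigList A).getD (n - 2) 0

/-- The underlying simple graph of a multigraph given by its adjacency matrix:
two distinct vertices are adjacent iff they are joined by at least one edge. -/
def toSimple {n : ℕ} (A : Matrix (Fin n) (Fin n) ℕ) : SimpleGraph (Fin n) :=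
  SimpleGraph.fromRel (fun i j => 0 < A i j)

/-- Vertex connectivity of a multigraph: the least size of a set of vertices
whose deletion disconnects the graph or reduces it to a single vertex. -/
noncomputable def kappa {n : ℕ} (A : Matrix (Fin n) (Fin n) ℕ) : ℕ :=
  sInf {k | ∃ S : Finset (Fin n), S.card = k ∧
    (¬ ((toSimple A).induce (↑(Sᶜ) : Set (Fin n))).Connected ∨ (Sᶜ).card = 1)}

/-- Vertex connectivity of a simple graph: the least size of a set of vertices
whose deletion disconnects the graph or reduces it to a single vertex. -/
noncomputable def kappaG {n : ℕ} (G : SimpleGraph (Fin n)) : ℕ :=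
  sInf {k | ∃ S : Finset (Fin n), S.card = k ∧
    (¬ (G.induce (↑(Sᶜ) : Set (Fin n))).Connected ∨ (Sᶜ).card = 1)}

/-- Edge connectivity of a multigraph: the least number of edges (counted with
multiplicity) whose deletion disconnects the graph.  A deleted edge multiset is
encoded by a symmetric matrix `B ≤ A`; it has `k` edges when `∑ᵢⱼ Bᵢⱼ = 2k`. -/
noncomputable def edgeConn {n : ℕ} (A : Matrix (Fin n) (Fin n) ℕ) : ℕ :=
  sInf {k | ∃ B : Matrix (Fin n) (Fin n) ℕ,
    (∀ i j, B i j ≤ A i j) ∧ (∀ i j, B i j = B j i) ∧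
    (∑ i, ∑ j, B i j) = 2 * k ∧ ¬ (toSimple (A - B)).Connected}

/-- The quotient matrix `Q(d,n)` from the paper. -/
noncomputable def Qmat (d n : ℝ) : Matrix (Fin 4) (Fin 4) ℝ :=
  !![(d+1)/2, (d-1)/2, 0, 0;
     d-1, 0, 1, 0;
     0, 1, 0, d-1;
     0, 0, (d-1)/(n-4), d-(d-1)/(n-4)]

/-- `ρ(d,n)`: the second-largest eigenvalue of `Q(d,n)`. -/
noncomputable def rho (d n : ℝ) : ℝ := lambda2 (Qmat d n)

/-- Delete one copy of the edge joining `u` and `v` from a multigraph. -/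
def deleteEdge {n : ℕ} (A : Matrix (Fin n) (Fin n) ℕ) (u v : Fin n) :
    Matrix (Fin n) (Fin n) ℕ :=
  Matrix.of fun i j => A i j - (if (i = u ∧ j = v) ∨ (i = v ∧ j = u) then 1 else 0)


/-!
The right-hand side `c` is the larger root of `c² = T c + C`, where `T = d - m₁/s₁ - m₂/s₂` and
`C = m₁²/s₁ + m₂²/s₂ - m₁m₂/(s₁s₂)`: these are the two eigenvalues other than `d` of the quotient
matrix of the partition `{v}, S₁, S₂`, and `c ≤ d`. Since `𝟙` is an eigenvector for `d`, by the
min-max principle it suffices to find a nonzero `x ⊥ 𝟙` with `c ‖x‖² ≤ xᵀAx`. Take `x` equal to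
`a`, `b`, `g` on `S₁`, `S₂`, `v`, with `g + s₁a + s₂b = 0`. Every edge between different parts
passes through `v`, so `xᵀAx = d ‖x‖² - m₁(g - a)² - m₂(g - b)²`, and `xᵀAx - c ‖x‖²` is a
binary quadratic form in `(a, b)` whose determinant is a multiple of `c² - T c - C = 0`; a
nontrivial zero of this degenerate form gives `x`.
-/

open scoped RealInnerProductSpace

namespace LinearMap.IsSymmetric

variable {E : Type*} [NormedAddCommGroup E] [InnerProductSpace ℝ E] [FiniteDimensional ℝ E]
  {T : E →ₗ[ℝ] E} (hT : T.IsSymmetric) {n : ℕ} (hn : Module.finrank ℝ E = n)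

lemma inner_map_self_eq_sum_eigenvalues (w : E) :
    ⟪w, T w⟫ = ∑ i, hT.eigenvalues hn i * ⟪hT.eigenvectorBasis hn i, w⟫ ^ 2 := by
  rw [← (hT.eigenvectorBasis hn).sum_inner_mul_inner w (T w)]
  refine Finset.sum_congr rfl fun i _ => ?_
  rw [← hT, apply_eigenvectorBasis, RCLike.ofReal_real_eq_id, id_eq, real_inner_smul_left,
    real_inner_comm w]
  ring

theorem le_eigenvalues_one (h1 : 1 < n) {x y : E} (hxy : LinearIndependent ℝ ![x, y]) {c : ℝ}
    (hc : ∀ a b : ℝ, c * ‖a • x + b • y‖ ^ 2 ≤ ⟪a • x + b • y, T (a • x + b • y)⟫) :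
    c ≤ hT.eigenvalues hn ⟨1, h1⟩ := by
  set i₀ : Fin n := ⟨0, by omega⟩
  obtain ⟨a, b, hab, hperp⟩ : ∃ a b : ℝ, ¬(a = 0 ∧ b = 0) ∧
      ⟪hT.eigenvectorBasis hn i₀, a • x + b • y⟫ = 0 := by
    simp only [inner_add_right, real_inner_smul_right]
    by_cases hp : ⟪hT.eigenvectorBasis hn i₀, x⟫ = 0
    · exact ⟨1, 0, by simp, by simp [hp]⟩
    · exact ⟨⟪hT.eigenvectorBasis hn i₀, y⟫, -⟪hT.eigenvectorBasis hn i₀, x⟫, by simp [hp],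
        by ring⟩
  have hw : 0 < ‖a • x + b • y‖ ^ 2 := by
    have := mt (LinearIndependent.pair_iff.mp hxy a b) hab
    positivity
  have hle : ⟪a • x + b • y, T (a • x + b • y)⟫ ≤
      hT.eigenvalues hn ⟨1, h1⟩ * ‖a • x + b • y‖ ^ 2 := by
    rw [inner_map_self_eq_sum_eigenvalues hT hn, ← (hT.eigenvectorBasis hn).sum_sq_inner_right,
      Finset.mul_sum]
    refine Finset.sum_le_sum fun i _ => ?_
    by_cases hi : i = i₀
    · simp [hi, hperp]
    · have : (⟨1, h1⟩ : Fin n) ≤ i := by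
        rw [Fin.le_iff_val_le_val]; exact Nat.one_le_iff_ne_zero.mpr fun h => hi (Fin.ext h)
      exact mul_le_mul_of_nonneg_right (hT.eigenvalues_antitone hn this) (sq_nonneg _)
  exact le_of_mul_le_mul_right ((hc a b).trans hle) hw

end LinearMap.IsSymmetric

lemma Multiset.reverse_sort_le_eq_sort_ge {α : Type*} [LinearOrder α] {s : Multiset α} :
    (s.sort (· ≤ ·)).reverse = s.sort (· ≥ ·) := by
  refine List.Perm.eq_of_pairwise (le := (· ≥ ·)) (fun a b _ _ h h' => le_antisymm h' h) ?_
    (Multiset.pairwise_sort _ _) ?_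
  · exact List.pairwise_reverse.mpr (Multiset.pairwise_sort _ _)
  · exact (List.reverse_perm _).trans (Multiset.coe_eq_coe.mp (by simp))

lemma lambda2_eq_eigenvalues₀ {n : ℕ} {A : Matrix (Fin n) (Fin n) ℝ} (hA : A.IsHermitian)
    (h1 : 1 < Fintype.card (Fin n)) : lambda2 A = hA.eigenvalues₀ ⟨1, h1⟩ := by
  have hsort : (eigList A).reverse = List.ofFn hA.eigenvalues₀ := by
    rw [eigList, Multiset.reverse_sort_le_eq_sort_ge, ← hA.sort_roots_charpoly_eq_eigenvalues₀]
    simp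
  have hlen : (eigList A).length = n := by
    simpa using congrArg List.length hsort
  have h1' : 1 < (eigList A).reverse.length := by simpa [hlen] using h1
  rw [lambda2, List.getD_eq_getElem _ _ (by simp at h1; omega)]
  have := List.getElem_reverse h1'
  simp only [hsort, List.getElem_ofFn, hlen] at this
  rw [this]
  congr 1

theorem le_lambda2_of_eigenvector {n : ℕ} {A : Matrix (Fin n) (Fin n) ℝ} (hA : A.IsHermitian)
    {z x : Fin n → ℝ} {μ c : ℝ} (hz : A *ᵥ z = μ • z) (hz0 : z ≠ 0) (hx0 : x ≠ 0)
    (hzx : z ⬝ᵥ x = 0) (hcμ : c ≤ μ) (hcx : c * (x ⬝ᵥ x) ≤ x ⬝ᵥ (A *ᵥ x)) :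
    c ≤ lambda2 A := by
  have hzz : 0 < z ⬝ᵥ z := by simpa using dotProduct_self_star_pos_iff.mpr hz0
  have hzx' : z ⬝ᵥ (A *ᵥ x) = 0 := by
    rw [dotProduct_mulVec, ← mulVec_transpose, (isHermitian_iff_isSymm.mp hA).eq, hz,
      smul_dotProduct, hzx, smul_zero]
  have hind : LinearIndependent ℝ ![WithLp.toLp 2 z, WithLp.toLp 2 x] := by
    refine LinearIndependent.pair_iff.mpr fun s t hst => ?_
    replace hst : s • z + t • x = 0 := congrArg WithLp.ofLp hst
    have hs : s = 0 := by
      have := congrArg (z ⬝ᵥ ·) hst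
      simp only [dotProduct_add, dotProduct_smul, hzx, smul_eq_mul, mul_zero, add_zero,
        dotProduct_zero] at this
      exact (mul_eq_zero.mp this).resolve_right hzz.ne'
    subst hs
    simpa [hx0] using hst
  have h1 : 1 < Fintype.card (Fin n) := by
    simpa [finrank_euclideanSpace, Nat.lt_iff_add_one_le] using hind.fintype_card_le_finrank
  rw [lambda2_eq_eigenvalues₀ hA h1]
  refine (isSymmetric_toEuclideanLin_iff.mpr hA).le_eigenvalues_one finrank_euclideanSpace h1 hind
    fun a b => ?_
  rw [← WithLp.toLp_smul, ← WithLp.toLp_smul, ← WithLp.toLp_add]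
  set w := a • z + b • x
  have hnorm : ‖WithLp.toLp 2 w‖ ^ 2 = w ⬝ᵥ w := by
    rw [EuclideanSpace.real_norm_sq_eq]
    simp [dotProduct, sq]
  have hinner : ⟪WithLp.toLp 2 w, toEuclideanLin A (WithLp.toLp 2 w)⟫ = w ⬝ᵥ (A *ᵥ w) := by
    simp [EuclideanSpace.inner_eq_star_dotProduct, dotProduct_comm]
  have hww : w ⬝ᵥ w = a ^ 2 * (z ⬝ᵥ z) + b ^ 2 * (x ⬝ᵥ x) := by
    simp only [w, dotProduct_add, add_dotProduct, dotProduct_smul, smul_dotProduct, smul_eq_mul,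
      hzx, dotProduct_comm x z]
    ring
  have hwAw : w ⬝ᵥ (A *ᵥ w) = a ^ 2 * μ * (z ⬝ᵥ z) + b ^ 2 * (x ⬝ᵥ (A *ᵥ x)) := by
    simp only [w, mulVec_add, mulVec_smul, dotProduct_add, add_dotProduct, dotProduct_smul,
      smul_dotProduct, smul_eq_mul, hzx', hz, dotProduct_comm x z, hzx]
    ring
  rw [hnorm, hinner, hww, hwAw]
  nlinarith [mul_le_mul_of_nonneg_left hcμ (mul_nonneg (sq_nonneg a) hzz.le),
    mul_le_mul_of_nonneg_left hcx (sq_nonneg b)]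

section Dirichlet

variable {ι : Type*} [Fintype ι]

def dirichletForm (M : Matrix ι ι ℝ) (x : ι → ℝ) : ℝ :=
  ∑ i, ∑ j, M i j * (x i - x j) ^ 2

lemma dotProduct_mulVec_eq_sub_dirichletForm {M : Matrix ι ι ℝ} (hM : M.IsSymm) {d : ℝ}
    (hrow : ∀ i, ∑ j, M i j = d) (x : ι → ℝ) :
    x ⬝ᵥ (M *ᵥ x) = d * (x ⬝ᵥ x) - dirichletForm M x / 2 := by
  have hleft : ∑ i, ∑ j, M i j * x i ^ 2 = d * (x ⬝ᵥ x) := by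
    simp only [← Finset.sum_mul, hrow, dotProduct, Finset.mul_sum, sq]
  have hright : ∑ i, ∑ j, M i j * x j ^ 2 = d * (x ⬝ᵥ x) := by
    rw [Finset.sum_comm, ← hleft]
    simp only [hM.apply]
  have hmid : ∑ i, ∑ j, M i j * (x i * x j) = x ⬝ᵥ (M *ᵥ x) := by
    simp only [dotProduct, mulVec, Finset.mul_sum]
    exact Finset.sum_congr rfl fun i _ => Finset.sum_congr rfl fun j _ => by ring
  have hexp : dirichletForm M x = ∑ i, ∑ j, M i j * x i ^ 2 - 2 * ∑ i, ∑ j, M i j * (x i * x j)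
      + ∑ i, ∑ j, M i j * x j ^ 2 := by
    simp only [dirichletForm, Finset.mul_sum, ← Finset.sum_sub_distrib, ← Finset.sum_add_distrib]
    exact Finset.sum_congr rfl fun i _ => Finset.sum_congr rfl fun j _ => by ring
  rw [hexp, hleft, hright, hmid]
  ring

variable [DecidableEq ι]

lemma dirichletForm_eq_two_mul_of_forall_ne {M : Matrix ι ι ℝ} (hM : M.IsSymm) {x : ι → ℝ} (v : ι)
    (hx : ∀ i j, i ≠ v → j ≠ v → M i j * (x i - x j) = 0) :
    dirichletForm M x = 2 * ∑ j, M v j * (x v - x j) ^ 2 := by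
  have hrow : ∀ i ≠ v, ∑ j, M i j * (x i - x j) ^ 2 = M v i * (x v - x i) ^ 2 := by
    intro i hi
    rw [Fintype.sum_eq_add_sum_compl v, Finset.sum_eq_zero, add_zero, hM.apply]
    · ring
    intro j hj
    rw [sq, ← mul_assoc, hx i j hi (by simpa using hj), zero_mul]
  have hcompl : ∑ i ∈ {v}ᶜ, M v i * (x v - x i) ^ 2 = ∑ j, M v j * (x v - x j) ^ 2 := by
    rw [Fintype.sum_eq_add_sum_compl v (fun j => M v j * (x v - x j) ^ 2)]
    simp
  rw [dirichletForm, Fintype.sum_eq_add_sum_compl v, Finset.sum_congr rfl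
    fun i hi => hrow i (by simpa using hi), hcompl, two_mul]

end Dirichlet

section PartVec

variable {ι : Type*} [DecidableEq ι] {v : ι} {S₁ S₂ : Finset ι} {a b g : ℝ}

def partVec (S₁ S₂ : Finset ι) (a b g : ℝ) (i : ι) : ℝ :=
  if i ∈ S₁ then a else if i ∈ S₂ then b else g

lemma partVec_of_mem_left {i : ι} (hi : i ∈ S₁) : partVec S₁ S₂ a b g i = a := if_pos hi

lemma partVec_of_mem_right (hdisj : Disjoint S₁ S₂) {i : ι} (hi : i ∈ S₂) :
    partVec S₁ S₂ a b g i = b := by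
  rw [partVec, if_neg (Finset.disjoint_right.mp hdisj hi), if_pos hi]

lemma partVec_ne_zero (hdisj : Disjoint S₁ S₂) (h1 : S₁.Nonempty) (h2 : S₂.Nonempty)
    (hab : a ≠ 0 ∨ b ≠ 0) : partVec S₁ S₂ a b g ≠ 0 := by
  intro h
  rcases hab with ha | hb
  · obtain ⟨i, hi⟩ := h1
    exact ha (by simpa [partVec_of_mem_left hi] using congrFun h i)
  · obtain ⟨i, hi⟩ := h2
    exact hb (by simpa [partVec_of_mem_right hdisj hi] using congrFun h i)

variable [Fintype ι]

lemma partVec_apply_of_union_eq_compl (hunion : S₁ ∪ S₂ = {v}ᶜ) :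
    partVec S₁ S₂ a b g v = g := by
  have hv : v ∉ S₁ ∪ S₂ := by simp [hunion]
  rw [Finset.mem_union, not_or] at hv
  rw [partVec, if_neg hv.1, if_neg hv.2]

lemma mem_or_mem_of_union_eq_compl (hunion : S₁ ∪ S₂ = {v}ᶜ) {i : ι} (hi : i ≠ v) :
    i ∈ S₁ ∨ i ∈ S₂ :=
  Finset.mem_union.mp (hunion ▸ by simpa using hi)

lemma sum_eq_add_sum_add_sum {R : Type*} [AddCommMonoid R] (hdisj : Disjoint S₁ S₂)
    (hunion : S₁ ∪ S₂ = {v}ᶜ) (f : ι → R) :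
    ∑ i, f i = f v + ∑ i ∈ S₁, f i + ∑ i ∈ S₂, f i := by
  rw [Fintype.sum_eq_add_sum_compl v, ← hunion, Finset.sum_union hdisj, add_assoc]

lemma sum_mul_comp_partVec (hdisj : Disjoint S₁ S₂) (hunion : S₁ ∪ S₂ = {v}ᶜ)
    (f : ι → ℝ) (φ : ℝ → ℝ) :
    ∑ i, f i * φ (partVec S₁ S₂ a b g i) =
      f v * φ g + (∑ i ∈ S₁, f i) * φ a + (∑ i ∈ S₂, f i) * φ b := by
  have h₁ : ∑ i ∈ S₁, f i * φ (partVec S₁ S₂ a b g i) = (∑ i ∈ S₁, f i) * φ a := by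
    rw [Finset.sum_mul]
    exact Finset.sum_congr rfl fun i hi => by rw [partVec_of_mem_left hi]
  have h₂ : ∑ i ∈ S₂, f i * φ (partVec S₁ S₂ a b g i) = (∑ i ∈ S₂, f i) * φ b := by
    rw [Finset.sum_mul]
    exact Finset.sum_congr rfl fun i hi => by rw [partVec_of_mem_right hdisj hi]
  rw [sum_eq_add_sum_add_sum hdisj hunion, partVec_apply_of_union_eq_compl hunion, h₁, h₂]

lemma one_dotProduct_partVec (hdisj : Disjoint S₁ S₂) (hunion : S₁ ∪ S₂ = {v}ᶜ) :
    1 ⬝ᵥ partVec S₁ S₂ a b g = g + #S₁ * a + #S₂ * b := by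
  simpa [dotProduct] using sum_mul_comp_partVec hdisj hunion (a := a) (b := b) (g := g) 1 id

lemma partVec_dotProduct_self (hdisj : Disjoint S₁ S₂) (hunion : S₁ ∪ S₂ = {v}ᶜ) :
    partVec S₁ S₂ a b g ⬝ᵥ partVec S₁ S₂ a b g = g ^ 2 + #S₁ * a ^ 2 + #S₂ * b ^ 2 := by
  simpa [dotProduct, sq] using
    sum_mul_comp_partVec hdisj hunion (a := a) (b := b) (g := g) 1 (fun t => t * t)

lemma dirichletForm_partVec {M : Matrix ι ι ℝ} (hM : M.IsSymm) (hdisj : Disjoint S₁ S₂)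
    (hunion : S₁ ∪ S₂ = {v}ᶜ) (hcomp : ∀ i ∈ S₁, ∀ j ∈ S₂, M i j = 0) :
    dirichletForm M (partVec S₁ S₂ a b g) =
      2 * ((∑ j ∈ S₁, M v j) * (g - a) ^ 2 + (∑ j ∈ S₂, M v j) * (g - b) ^ 2) := by
  rw [dirichletForm_eq_two_mul_of_forall_ne hM v, partVec_apply_of_union_eq_compl hunion]
  · rw [sum_mul_comp_partVec hdisj hunion (M v) (fun t => (g - t) ^ 2)]
    ring
  intro i j hi hj
  rcases mem_or_mem_of_union_eq_compl hunion hi with hi | hi <;>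
    rcases mem_or_mem_of_union_eq_compl hunion hj with hj | hj
  · simp [partVec_of_mem_left hi, partVec_of_mem_left hj]
  · simp [hcomp i hi j hj]
  · simp [hM.apply j i, hcomp j hj i hi]
  · simp [partVec_of_mem_right hdisj hi, partVec_of_mem_right hdisj hj]

end PartVec

lemma exists_ne_zero_quadratic_form_eq_zero {p q r : ℝ} (h : p * r = q ^ 2) :
    ∃ a b : ℝ, (a ≠ 0 ∨ b ≠ 0) ∧ p * a ^ 2 + 2 * q * a * b + r * b ^ 2 = 0 := by
  by_cases hp : p = 0
  · refine ⟨1, 0, by simp, ?_⟩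
    have hq : q = 0 := by simpa [hp, eq_comm] using h
    simp [hp, hq]
  · exact ⟨q, -p, Or.inr (neg_ne_zero.mpr hp), by linear_combination p * h⟩

lemma exists_quotient_vector {s₁ s₂ m₁ m₂ c : ℝ} (hs₁ : s₁ ≠ 0) (hs₂ : s₂ ≠ 0)
    (hc : c ^ 2 = (m₁ + m₂ - m₁ / s₁ - m₂ / s₂) * c +
      (m₁ ^ 2 / s₁ + m₂ ^ 2 / s₂ - m₁ * m₂ / (s₁ * s₂))) :
    ∃ a b g : ℝ, (a ≠ 0 ∨ b ≠ 0) ∧ g + s₁ * a + s₂ * b = 0 ∧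
      m₁ * (g - a) ^ 2 + m₂ * (g - b) ^ 2 = (m₁ + m₂ - c) * (g ^ 2 + s₁ * a ^ 2 + s₂ * b ^ 2) := by
  set e := m₁ + m₂ - c
  -- With `g = -(s₁ a + s₂ b)`, `e (g² + s₁ a² + s₂ b²) - m₁ (g - a)² - m₂ (g - b)²` is the form
  -- `p a² + 2 q a b + r b²` below, and `p r - q²` is `1 + s₁ + s₂` times `hchar`.
  have hchar : s₁ * s₂ * c ^ 2 = ((m₁ + m₂) * s₁ * s₂ - m₁ * s₂ - m₂ * s₁) * c +
      (m₁ ^ 2 * s₂ + m₂ ^ 2 * s₁ - m₁ * m₂) := by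
    rw [hc]; field_simp
  obtain ⟨a, b, hab, hQ⟩ := exists_ne_zero_quadratic_form_eq_zero
    (p := e * (s₁ + s₁ ^ 2) - m₁ * (s₁ + 1) ^ 2 - m₂ * s₁ ^ 2)
    (q := e * s₁ * s₂ - m₁ * (s₁ + 1) * s₂ - m₂ * s₁ * (s₂ + 1))
    (r := e * (s₂ + s₂ ^ 2) - m₁ * s₂ ^ 2 - m₂ * (s₂ + 1) ^ 2)
    (by linear_combination (1 + s₁ + s₂) * hchar)
  exact ⟨a, b, -(s₁ * a + s₂ * b), hab, by ring, by linear_combination -hQ⟩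

lemma quadratic_root_sq {T C : ℝ} (h : 0 ≤ T ^ 2 + 4 * C) :
    (1 / 2 * (T + √(T ^ 2 + 4 * C))) ^ 2 = T * (1 / 2 * (T + √(T ^ 2 + 4 * C))) + C := by
  linear_combination (1 / 4) * Real.sq_sqrt h

lemma quadratic_root_le {T C d : ℝ} (hT : T ≤ 2 * d) (hC : C ≤ d * (d - T)) :
    1 / 2 * (T + √(T ^ 2 + 4 * C)) ≤ d := by
  have : √(T ^ 2 + 4 * C) ≤ 2 * d - T := Real.sqrt_le_iff.mpr ⟨by linarith, by nlinarith⟩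
  linarith

lemma quotientConst_nonneg {s₁ s₂ m₁ m₂ : ℝ} (hs₁ : 1 ≤ s₁) (hs₂ : 1 ≤ s₂) :
    0 ≤ m₁ ^ 2 / s₁ + m₂ ^ 2 / s₂ - m₁ * m₂ / (s₁ * s₂) := by
  have : m₁ ^ 2 / s₁ + m₂ ^ 2 / s₂ - m₁ * m₂ / (s₁ * s₂) =
      (m₁ ^ 2 * s₂ + m₂ ^ 2 * s₁ - m₁ * m₂) / (s₁ * s₂) := by
    field_simp
  rw [this]
  apply div_nonneg _ (by positivity)
  nlinarith [sq_nonneg (m₁ - m₂), mul_le_mul_of_nonneg_left hs₂ (sq_nonneg m₁),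
    mul_le_mul_of_nonneg_left hs₁ (sq_nonneg m₂), sq_nonneg m₁, sq_nonneg m₂]

lemma quotient_root_le {s₁ s₂ m₁ m₂ : ℝ} (hs₁ : 0 < s₁) (hs₂ : 0 < s₂) (hm₁ : 0 ≤ m₁)
    (hm₂ : 0 ≤ m₂) :
    1 / 2 * (m₁ + m₂ - m₁ / s₁ - m₂ / s₂ + √((m₁ + m₂ - m₁ / s₁ - m₂ / s₂) ^ 2 +
      4 * (m₁ ^ 2 / s₁ + m₂ ^ 2 / s₂ - m₁ * m₂ / (s₁ * s₂)))) ≤ m₁ + m₂ := by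
  have hu₁ : 0 ≤ m₁ / s₁ := div_nonneg hm₁ hs₁.le
  have hu₂ : 0 ≤ m₂ / s₂ := div_nonneg hm₂ hs₂.le
  refine quadratic_root_le (by linarith) ?_
  have h₁ : m₁ ^ 2 / s₁ ≤ (m₁ + m₂) * (m₁ / s₁) := by
    rw [sq, mul_div_assoc]; exact mul_le_mul_of_nonneg_right (by linarith) hu₁
  have h₂ : m₂ ^ 2 / s₂ ≤ (m₁ + m₂) * (m₂ / s₂) := by
    rw [sq, mul_div_assoc]; exact mul_le_mul_of_nonneg_right (by linarith) hu₂
  have : 0 ≤ m₁ * m₂ / (s₁ * s₂) := div_nonneg (mul_nonneg hm₁ hm₂) (mul_pos hs₁ hs₂).le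
  linarith

theorem le_lambda2_of_cutVertex {n : ℕ} {M : Matrix (Fin n) (Fin n) ℝ} (hM : M.IsSymm) {d : ℝ}
    (hrow : ∀ i, ∑ j, M i j = d) {v : Fin n} (hvv : M v v = 0) (hv : ∀ j, 0 ≤ M v j)
    {S₁ S₂ : Finset (Fin n)} (h1 : S₁.Nonempty) (h2 : S₂.Nonempty) (hdisj : Disjoint S₁ S₂)
    (hunion : S₁ ∪ S₂ = {v}ᶜ) (hcomp : ∀ i ∈ S₁, ∀ j ∈ S₂, M i j = 0)
    {s₁ s₂ m₁ m₂ : ℝ} (hs₁ : s₁ = #S₁) (hs₂ : s₂ = #S₂)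
    (hm₁ : m₁ = ∑ j ∈ S₁, M v j) (hm₂ : m₂ = ∑ j ∈ S₂, M v j) :
    1 / 2 * (d - m₁ / s₁ - m₂ / s₂ + √((d - m₁ / s₁ - m₂ / s₂) ^ 2 +
      4 * (m₁ ^ 2 / s₁ + m₂ ^ 2 / s₂ - m₁ * m₂ / (s₁ * s₂)))) ≤ lambda2 M := by
  have hdm : m₁ + m₂ = d := by
    rw [← hrow v, sum_eq_add_sum_add_sum hdisj hunion, hvv, hm₁, hm₂, zero_add]
  subst hdm
  have hs₁1 : 1 ≤ s₁ := by rw [hs₁]; exact_mod_cast h1.card_pos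
  have hs₂1 : 1 ≤ s₂ := by rw [hs₂]; exact_mod_cast h2.card_pos
  have hm₁0 : 0 ≤ m₁ := hm₁ ▸ Finset.sum_nonneg fun j _ => hv j
  have hm₂0 : 0 ≤ m₂ := hm₂ ▸ Finset.sum_nonneg fun j _ => hv j
  have hC := quotientConst_nonneg (m₁ := m₁) (m₂ := m₂) hs₁1 hs₂1
  obtain ⟨a, b, g, hab, hsum, hQ⟩ :=
    exists_quotient_vector (s₁ := s₁) (s₂ := s₂) (m₁ := m₁) (m₂ := m₂) (by positivity)
      (by positivity) (quadratic_root_sq (add_nonneg (sq_nonneg _) (by linarith)))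
  refine le_lambda2_of_eigenvector (isHermitian_iff_isSymm.mpr hM) (z := 1)
    (x := partVec S₁ S₂ a b g) ?_ (fun h => by simpa using congrFun h v)
    (partVec_ne_zero hdisj h1 h2 hab) ?_ (quotient_root_le (by positivity) (by positivity) hm₁0 hm₂0) ?_
  · ext i; simp [mulVec, dotProduct, hrow]
  · rw [one_dotProduct_partVec hdisj hunion, ← hs₁, ← hs₂, hsum]
  · rw [dotProduct_mulVec_eq_sub_dirichletForm hM hrow,
      dirichletForm_partVec hM hdisj hunion hcomp, partVec_dotProduct_self hdisj hunion,
      ← hm₁, ← hm₂, ← hs₁, ← hs₂]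
    linarith

theorem stmt18_general {n d : ℕ}
    (A : Matrix (Fin n) (Fin n) ℕ)
    (hsym : ∀ i j, A i j = A j i) (hdiag : ∀ i, A i i = 0)
    (hreg : ∀ i, ∑ j, A i j = d)
    (v : Fin n)
    (S₁ S₂ : Finset (Fin n)) (h1 : S₁.Nonempty) (h2 : S₂.Nonempty)
    (hdisj : Disjoint S₁ S₂) (hunion : S₁ ∪ S₂ = ({v} : Finset (Fin n))ᶜ)
    (hcomp : ∀ i ∈ S₁, ∀ j ∈ S₂, A i j = 0)
    (s₁ s₂ : ℕ) (hs₁ : s₁ = S₁.card) (hs₂ : s₂ = S₂.card)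
    (m₁ m₂ : ℕ) (hm₁ : m₁ = ∑ j ∈ S₁, A v j) (hm₂ : m₂ = ∑ j ∈ S₂, A v j) :
    (1 / 2 : ℝ) *
      ((d : ℝ) - (m₁ : ℝ) / (s₁ : ℝ) - (m₂ : ℝ) / (s₂ : ℝ) +
        Real.sqrt
          (((d : ℝ) - (m₁ : ℝ) / (s₁ : ℝ) - (m₂ : ℝ) / (s₂ : ℝ)) ^ 2 +
            4 * ((m₁ : ℝ) ^ 2 / (s₁ : ℝ) + (m₂ : ℝ) ^ 2 / (s₂ : ℝ) -
              (m₁ : ℝ) * (m₂ : ℝ) / ((s₁ : ℝ) * (s₂ : ℝ))))) ≤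
      lambda2 (A.map (fun x => (x : ℝ))) := by
  have hM : (A.map (fun x => (x : ℝ))).IsSymm := IsSymm.ext fun i j => by simp [hsym i j]
  subst hs₁ hs₂ hm₁ hm₂
  exact le_lambda2_of_cutVertex hM (fun i => by simp [← hreg i]) (by simp [hdiag])
    (fun j => by simp) h1 h2 hdisj hunion (fun i hi j hj => by simp [hcomp i hi j hj])
    rfl rfl (by simp) (by simp)

/-- for a connected n-vertex d-regular multigraph G with a
cut-vertex v, with the vertices of G − v partitioned into nonempty sets S₁ and
S₂ (of sizes s₁, s₂), each a union of connected components of G − v, and with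
m₁, m₂ the numbers of edges from v to S₁ and S₂,
λ2(G) ≥ (1/2)[d − m₁/s₁ − m₂/s₂ + √((d − m₁/s₁ − m₂/s₂)² +
4(m₁²/s₁ + m₂²/s₂ − m₁m₂/(s₁s₂)))]. -/
theorem stmt18 {n d : ℕ}
    (A : Matrix (Fin n) (Fin n) ℕ)
    (hsym : ∀ i j, A i j = A j i) (hdiag : ∀ i, A i i = 0)
    (hreg : ∀ i, ∑ j, A i j = d)
    (hconn : (toSimple A).Connected)
    (v : Fin n)
    (hcut : ¬ ((toSimple A).induce ({v}ᶜ : Set (Fin n))).Connected)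
    (S₁ S₂ : Finset (Fin n)) (h1 : S₁.Nonempty) (h2 : S₂.Nonempty)
    (hdisj : Disjoint S₁ S₂) (hunion : S₁ ∪ S₂ = ({v} : Finset (Fin n))ᶜ)
    (hcomp : ∀ i ∈ S₁, ∀ j ∈ S₂, A i j = 0)
    (s₁ s₂ : ℕ) (hs₁ : s₁ = S₁.card) (hs₂ : s₂ = S₂.card)
    (m₁ m₂ : ℕ) (hm₁ : m₁ = ∑ j ∈ S₁, A v j) (hm₂ : m₂ = ∑ j ∈ S₂, A v j) :
    (1 / 2 : ℝ) *
      ((d : ℝ) - (m₁ : ℝ) / (s₁ : ℝ) - (m₂ : ℝ) / (s₂ : ℝ) +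
        Real.sqrt
          (((d : ℝ) - (m₁ : ℝ) / (s₁ : ℝ) - (m₂ : ℝ) / (s₂ : ℝ)) ^ 2 +
            4 * ((m₁ : ℝ) ^ 2 / (s₁ : ℝ) + (m₂ : ℝ) ^ 2 / (s₂ : ℝ) -
              (m₁ : ℝ) * (m₂ : ℝ) / ((s₁ : ℝ) * (s₂ : ℝ))))) ≤
      lambda2 (A.map (fun x => (x : ℝ))) :=
  stmt18_general A hsym hdiag hreg v S₁ S₂ h1 h2 hdisj hunion hcomp s₁ s₂ hs₁ hs₂ m₁ m₂ hm₁ hm₂
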